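/- For positive integers k, m, define C_{k,m} = exp((1/4π) ∫_{-π}^{π} ln(1 - (cos kθ + cos mθ)/2) dθ). Then 0 < C_{k,m} < 1, i.e., the integral ∫_{-π}^{π} ln(1 - (cos kθ + cos mθ)/2) dθ is finite and negative. -/

import Mathlib

open Real MeasureTheory Set
open scoped Interval

/-!
With `F θ = 1 - (cos kθ + cos mθ)/2`, the integrand `log F` is the logarithm of a real-analytic
function, hence interval integrable despite its logarithmic singularities. Since `log x ≤ x - 1`,
with equality only at `x = 1`, and `F - 1 = -(cos kθ + cos mθ)/2` has mean zero over a period,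
`∫ log F < ∫ (F - 1) = 0`: the inequality is strict on the open set where `F ≠ 1`, which
contains `θ = 0`.
-/

lemma intervalIntegrable_log_one_sub_cos_add_cos (k m a b : ℝ) :
    IntervalIntegrable (fun θ : ℝ => log (1 - (cos (k * θ) + cos (m * θ)) / 2))
      volume a b := by
  have hF : AnalyticOnNhd ℝ (fun θ : ℝ => 1 - (cos (k * θ) + cos (m * θ)) / 2) [[a, b]] :=
    fun θ _ => by fun_prop
  exact hF.meromorphicOn.intervalIntegrable_log

lemma integral_cos_nat_mul_neg_pi_pi {j : ℕ} (hj : j ≠ 0) :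
    ∫ θ in (-π)..π, cos (j * θ) = 0 := by
  rw [intervalIntegral.integral_comp_mul_left cos (Nat.cast_ne_zero.2 hj)]
  simp [integral_cos, sin_nat_mul_pi]

lemma ae_cos_mul_ne_one {k : ℝ} (hk : k ≠ 0) : ∀ᵐ θ : ℝ, cos (k * θ) ≠ 1 := by
  refine measure_mono_null (fun θ hθ => ?_)
    ((countable_range fun n : ℤ => n * (2 * π) / k).measure_zero volume)
  obtain ⟨n, hn⟩ := (cos_eq_one_iff _).1 (not_not.1 hθ)
  exact ⟨n, by field_simp; linarith⟩

lemma integral_log_lt_integral_sub_one {f : ℝ → ℝ} {a b x₀ : ℝ}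
    (hf : Continuous f) (hlog : IntervalIntegrable (fun x => log (f x)) volume a b)
    (hpos : ∀ᵐ x, 0 < f x) (hx₀ : x₀ ∈ Ioo a b) (hfx₀ : f x₀ ≠ 1) :
    ∫ x in a..b, log (f x) < ∫ x in a..b, (f x - 1) := by
  have hab : a ≤ b := (hx₀.1.trans hx₀.2).le
  refine intervalIntegral.integral_lt_integral_of_ae_le_of_measure_setOfPred_lt_ne_zero hab hlog
    ((hf.sub continuous_const).intervalIntegrable a b)
    (ae_restrict_of_ae (hpos.mono fun x hx => log_le_sub_one_of_pos hx)) ?_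
  set U := Ioo a b ∩ {x | f x ≠ 1}
  have hU : 0 < volume.restrict (Ioc a b) U := by
    rw [Measure.restrict_apply' measurableSet_Ioc,
      inter_eq_left.2 (inter_subset_left.trans Ioo_subset_Ioc_self)]
    exact (isOpen_Ioo.inter (isOpen_ne_fun hf continuous_const)).measure_pos volume
      ⟨x₀, hx₀, hfx₀⟩
  refine (hU.trans_le (measure_mono_ae ?_)).ne'
  filter_upwards [ae_restrict_of_ae hpos] with x hx hxU
  exact log_lt_sub_one_of_pos hx hxU.2

theorem stmt_7 (k m : ℕ) (hk : 0 < k) (hm : 0 < m) :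
    IntervalIntegrable
        (fun θ : ℝ => Real.log (1 - (Real.cos (k * θ) + Real.cos (m * θ)) / 2))
        volume (-π) π ∧
    (∫ θ in (-π)..π, Real.log (1 - (Real.cos (k * θ) + Real.cos (m * θ)) / 2)) < 0 ∧
    0 < Real.exp ((1 / (4 * π)) *
        ∫ θ in (-π)..π, Real.log (1 - (Real.cos (k * θ) + Real.cos (m * θ)) / 2)) ∧
    Real.exp ((1 / (4 * π)) *
        ∫ θ in (-π)..π, Real.log (1 - (Real.cos (k * θ) + Real.cos (m * θ)) / 2)) < 1 := by
  set F : ℝ → ℝ := fun θ => 1 - (cos (k * θ) + cos (m * θ)) / 2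
  have hint : IntervalIntegrable (fun θ => log (F θ)) volume (-π) π :=
    intervalIntegrable_log_one_sub_cos_add_cos k m _ _
  have hpos : ∀ᵐ θ : ℝ, 0 < F θ := by
    filter_upwards [ae_cos_mul_ne_one (Nat.cast_ne_zero.2 hk.ne')] with θ hθ
    simp only [F]
    linarith [(cos_le_one _).lt_of_ne hθ, cos_le_one ((m : ℝ) * θ)]
  have hmean : ∫ θ in (-π)..π, (F θ - 1) = 0 := by
    simp only [F, sub_sub_cancel_left, intervalIntegral.integral_neg,
      intervalIntegral.integral_div]
    have hcos (j : ℝ) : IntervalIntegrable (fun θ => cos (j * θ)) volume (-π) π :=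
      (continuous_cos.comp (continuous_const_mul j)).intervalIntegrable _ _
    rw [intervalIntegral.integral_add (hcos k) (hcos m),
      integral_cos_nat_mul_neg_pi_pi hk.ne', integral_cos_nat_mul_neg_pi_pi hm.ne']
    simp
  have hneg : ∫ θ in (-π)..π, log (F θ) < 0 :=
    hmean ▸ integral_log_lt_integral_sub_one (by fun_prop) hint hpos
      ⟨neg_lt_zero.2 pi_pos, pi_pos⟩ (by simp [F])
  exact ⟨hint, hneg, exp_pos _, exp_lt_one_iff.2 (mul_neg_of_pos_of_neg (by positivity) hneg)⟩
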